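/- Let ${\cal E}_E(|y\rangle\langle y|) = \sum_{x \in \mathbb{F}_2^l} P(x) |P,y,x\rangle\langle P,y,x|$ where $|P,y,x\rangle = \sum_{z \in \mathbb{F}_2^l} (-1)^{z \cdot y}\sqrt{P(z|x)}\,|(x,z)\rangle$, for a joint distribution $P(x,z)$ on $\mathbb{F}_2^l \times \mathbb{F}_2^l$. Then for any $y, y' \in \mathbb{F}_2^l$, the fidelity satisfies $F({\cal E}_E(|y\rangle\langle y|), {\cal E}_E(|y'\rangle\langle y'|)) \geq 1 - 2P_{ph}$, where $P_{ph} = 1 - \sum_x P(x, 0)$. -/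

import Mathlib

open Matrix
open scoped ComplexOrder

open Classical in
/-- The positive-semidefinite square root of a matrix (junk value `0` off the PSD cone). -/
noncomputable def msqrt {ι : Type*} [Fintype ι] [DecidableEq ι]
    (A : Matrix ι ι ℂ) : Matrix ι ι ℂ :=
  if h : A.PosSemidef then
    h.1.eigenvectorUnitary.1 * diagonal ((↑) ∘ (√·) ∘ h.1.eigenvalues) *
      (star h.1.eigenvectorUnitary : Matrix ι ι ℂ)
  else 0

/-- The Uhlmann fidelity `F(ρ, ρ') = Tr √(√ρ' ρ √ρ')`. -/
noncomputable def fidelity {ι : Type*} [Fintype ι] [DecidableEq ι]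
    (ρ ρ' : Matrix ι ι ℂ) : ℝ :=
  ((msqrt (msqrt ρ' * ρ * msqrt ρ')).trace).re

/-- The marginal `P(x) = ∑ z P(x, z)`. -/
noncomputable def margP (l : ℕ)
    (P : (Fin l → ZMod 2) × (Fin l → ZMod 2) → ℝ) (x : Fin l → ZMod 2) : ℝ :=
  ∑ z, P (x, z)

/-- Eve's vector `|P,y,x⟩ = ∑ z (-1)^{z·y} √(P(z|x)) |(x,z)⟩`. -/
noncomputable def eveKet (l : ℕ)
    (P : (Fin l → ZMod 2) × (Fin l → ZMod 2) → ℝ)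
    (y x : Fin l → ZMod 2) :
    ((Fin l → ZMod 2) × (Fin l → ZMod 2)) → ℂ :=
  fun w =>
    if w.1 = x then
      (-1 : ℂ) ^ ((w.2 ⬝ᵥ y : ZMod 2)).val *
        (Real.sqrt (P (x, w.2) / margP l P x) : ℝ)
    else 0

/-- Eve's state `ρ_y = ∑ x P(x) |P,y,x⟩⟨P,y,x|` after Alice sends `|y⟩` in the `+`
basis through a Pauli channel with error distribution `P`. -/
noncomputable def eveState (l : ℕ)
    (P : (Fin l → ZMod 2) × (Fin l → ZMod 2) → ℝ)
    (y : Fin l → ZMod 2) :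
    Matrix ((Fin l → ZMod 2) × (Fin l → ZMod 2))
      ((Fin l → ZMod 2) × (Fin l → ZMod 2)) ℂ :=
  ∑ x, (margP l P x : ℂ) • Matrix.vecMulVec (eveKet l P y x) (star (eveKet l P y x))

/-! The kets `|P,y,x⟩` for distinct `x` have disjoint supports, and `|P,y',x⟩` is a unit vector
whenever `P(x) ≠ 0`. Both states are therefore block diagonal along the same family, so the square
roots in the fidelity can be taken block by block, giving
`F = ∑ₓ P(x) |⟨P,y',x|P,y,x⟩|`. Now `P(x) ⟨P,y',x|P,y,x⟩ = ∑_z (-1)^{z·y' + z·y} P(x,z)` and the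
`z = 0` term carries the sign `+1`, so each summand is at least `2 P(x,0) - P(x)`; summing over
`x` gives `1 - 2 P_ph`. -/

namespace Matrix

variable {ι κ R : Type*} [Fintype ι] [Fintype κ]

theorem sum_smul_vecMulVec_mul_sum_smul_vecMulVec [CommSemiring R] (f g : κ → R)
    (u u' w w' : κ → ι → R) (h : Pairwise fun x x' => u' x ⬝ᵥ w x' = 0) :
    (∑ x, f x • vecMulVec (u x) (u' x)) * (∑ x, g x • vecMulVec (w x) (w' x)) =
      ∑ x, (f x * g x * (u' x ⬝ᵥ w x)) • vecMulVec (u x) (w' x) := by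
  rw [Finset.sum_mul_sum]
  refine Finset.sum_congr rfl fun x _ => ?_
  simp_rw [smul_mul_smul_comm, vecMulVec_mul_vecMulVec, vecMulVec_smul, smul_smul]
  refine Finset.sum_eq_single x (fun x' _ hx' => ?_) (by simp)
  rw [h hx'.symm, mul_zero, zero_smul]

end Matrix

open MatrixOrder in
lemma msqrt_eq_of_sq_eq {ι : Type*} [Fintype ι] [DecidableEq ι] {A B : Matrix ι ι ℂ}
    (hB : B.PosSemidef) (h : B ^ 2 = A) : msqrt A = B := by
  have hA : A.PosSemidef := h ▸ hB.pow 2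
  have hsqrt : CFC.sqrt A = B := h ▸ CFC.sqrt_sq B hB.nonneg
  rw [msqrt, dif_pos hA, ← hsqrt, CFC.sqrt_eq_real_sqrt A hA.nonneg, cfcₙ_eq_cfc,
    hA.1.cfc_eq, IsHermitian.cfc, Unitary.conjStarAlgAut_apply]
  rfl

theorem ofReal_mul_star_dotProduct_self {ι : Type*} [Fintype ι] {a : ι → ℂ} {r : ℝ}
    (h : r ≠ 0 → star a ⬝ᵥ a = 1) : (r : ℂ) * (star a ⬝ᵥ a) = r := by
  by_cases hr : r = 0
  · simp [hr]
  · rw [h hr, mul_one]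

section OrthonormalOnSupport

variable {ι κ : Type*} [Fintype ι] [Fintype κ] {v : κ → ι → ℂ} {s : κ → ℝ}

theorem posSemidef_sum_smul_vecMulVec_star (hs : ∀ x, 0 ≤ s x) :
    (∑ x, (s x : ℂ) • vecMulVec (v x) (star (v x))).PosSemidef :=
  posSemidef_sum _ fun x _ =>
    (posSemidef_vecMulVec_self_star (v x)).smul (Complex.zero_le_real.mpr (hs x))

variable (hv : Pairwise fun x x' => star (v x) ⬝ᵥ v x' = 0)
  (hs : ∀ x, s x ≠ 0 → star (v x) ⬝ᵥ v x = 1)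
include hs

theorem trace_sum_smul_vecMulVec_star :
    (∑ x, (s x : ℂ) • vecMulVec (v x) (star (v x))).trace = ∑ x, (s x : ℂ) := by
  simp only [trace_sum, trace_smul, trace_vecMulVec, smul_eq_mul, dotProduct_comm (v _),
    ofReal_mul_star_dotProduct_self (hs _)]

include hv

theorem sum_smul_vecMulVec_star_sq [DecidableEq ι] :
    (∑ x, (s x : ℂ) • vecMulVec (v x) (star (v x))) ^ 2 =
      ∑ x, ((s x ^ 2 : ℝ) : ℂ) • vecMulVec (v x) (star (v x)) := by
  rw [sq, sum_smul_vecMulVec_mul_sum_smul_vecMulVec _ _ _ _ _ _ hv]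
  refine Finset.sum_congr rfl fun x _ => ?_
  rw [mul_assoc, ofReal_mul_star_dotProduct_self (hs _)]
  push_cast
  ring_nf

theorem msqrt_sum_sq_smul_vecMulVec_star [DecidableEq ι] (hs0 : ∀ x, 0 ≤ s x) :
    msqrt (∑ x, ((s x ^ 2 : ℝ) : ℂ) • vecMulVec (v x) (star (v x))) =
      ∑ x, (s x : ℂ) • vecMulVec (v x) (star (v x)) :=
  msqrt_eq_of_sq_eq (posSemidef_sum_smul_vecMulVec_star hs0)
    (sum_smul_vecMulVec_star_sq hv hs)

end OrthonormalOnSupport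

theorem fidelity_sum_smul_vecMulVec_star {ι κ : Type*} [Fintype ι] [DecidableEq ι] [Fintype κ]
    {v v' : κ → ι → ℂ} {m : κ → ℝ} (hm : ∀ x, 0 ≤ m x)
    (hv' : Pairwise fun x x' => star (v' x) ⬝ᵥ v' x' = 0)
    (hv'v : Pairwise fun x x' => star (v' x) ⬝ᵥ v x' = 0)
    (hnorm : ∀ x, m x ≠ 0 → star (v' x) ⬝ᵥ v' x = 1) :
    fidelity (∑ x, (m x : ℂ) • vecMulVec (v x) (star (v x)))
        (∑ x, (m x : ℂ) • vecMulVec (v' x) (star (v' x))) =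
      ∑ x, m x * ‖star (v' x) ⬝ᵥ v x‖ := by
  have hvv' : Pairwise fun x x' => star (v x) ⬝ᵥ v' x' = 0 := fun x x' h =>
    (star_dotProduct _ _).trans (by rw [hv'v h.symm, star_zero])
  have hsqrt : msqrt (∑ x, (m x : ℂ) • vecMulVec (v' x) (star (v' x))) =
      ∑ x, (√(m x) : ℂ) • vecMulVec (v' x) (star (v' x)) := by
    have hsq : ∀ x, m x = √(m x) ^ 2 := fun x => (Real.sq_sqrt (hm x)).symm
    conv_lhs => enter [1, 2, x]; rw [hsq x]
    exact msqrt_sum_sq_smul_vecMulVec_star hv'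
      (fun x hx => hnorm x (Real.sqrt_ne_zero'.mp hx).ne') fun x => Real.sqrt_nonneg _
  have hmid : (∑ x, (√(m x) : ℂ) • vecMulVec (v' x) (star (v' x))) *
      (∑ x, (m x : ℂ) • vecMulVec (v x) (star (v x))) *
      (∑ x, (√(m x) : ℂ) • vecMulVec (v' x) (star (v' x))) =
      ∑ x, (((m x * ‖star (v' x) ⬝ᵥ v x‖) ^ 2 : ℝ) : ℂ) • vecMulVec (v' x) (star (v' x)) := by
    rw [sum_smul_vecMulVec_mul_sum_smul_vecMulVec _ _ _ _ _ _ hv'v,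
      sum_smul_vecMulVec_mul_sum_smul_vecMulVec _ _ _ _ _ _ hvv']
    refine Finset.sum_congr rfl fun x _ => congrArg (· • _) ?_
    rw [star_dotProduct (v x) (v' x), Complex.star_def]
    set c := star (v' x) ⬝ᵥ v x
    have hc := Complex.mul_conj' c
    have hm' : (√(m x) : ℂ) * √(m x) = m x := by exact_mod_cast Real.mul_self_sqrt (hm x)
    push_cast
    linear_combination (m x * (c * (starRingEnd ℂ) c)) * hm' + (m x : ℂ) ^ 2 * hc
  have hnorm' : ∀ x, m x * ‖star (v' x) ⬝ᵥ v x‖ ≠ 0 → star (v' x) ⬝ᵥ v' x = 1 :=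
    fun x hx => hnorm x (left_ne_zero_of_mul hx)
  rw [fidelity, hsqrt, hmid, msqrt_sum_sq_smul_vecMulVec_star hv' hnorm'
    fun x => mul_nonneg (hm x) (norm_nonneg _), trace_sum_smul_vecMulVec_star hnorm',
    ← Complex.ofReal_sum, Complex.ofReal_re]

theorem two_mul_sub_sum_le_sum_mul {α : Type*} [Fintype α] {p ε : α → ℝ} (hp : ∀ a, 0 ≤ p a)
    (hε : ∀ a, -1 ≤ ε a) {a : α} (ha : ε a = 1) : 2 * p a - ∑ b, p b ≤ ∑ b, ε b * p b := by
  have h := Finset.single_le_sum (f := fun b => (ε b + 1) * p b)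
    (fun b _ => mul_nonneg (by linarith [hε b]) (hp b)) (Finset.mem_univ a)
  simp only [add_mul, one_mul, Finset.sum_add_distrib, ha] at h
  linarith

section Eve

variable {l : ℕ} {P : (Fin l → ZMod 2) × (Fin l → ZMod 2) → ℝ}

theorem margP_mul_div_margP (hP0 : ∀ w, 0 ≤ P w) (x z : Fin l → ZMod 2) :
    margP l P x * (P (x, z) / margP l P x) = P (x, z) := by
  by_cases hx : margP l P x = 0
  · rw [hx, zero_mul, eq_comm]
    exact (Finset.sum_eq_zero_iff_of_nonneg fun z _ => hP0 (x, z)).mp hx z (Finset.mem_univ z)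
  · exact mul_div_cancel₀ _ hx

theorem eveKet_apply_of_ne {y x : Fin l → ZMod 2} {w : (Fin l → ZMod 2) × (Fin l → ZMod 2)}
    (hw : w.1 ≠ x) : eveKet l P y x w = 0 :=
  if_neg hw

theorem pairwise_star_eveKet_dotProduct_eveKet (y y' : Fin l → ZMod 2) :
    Pairwise fun x x' => star (eveKet l P y x) ⬝ᵥ eveKet l P y' x' = 0 := by
  intro x x' hxx'
  refine Finset.sum_eq_zero fun w _ => ?_
  by_cases hw : w.1 = x
  · rw [eveKet_apply_of_ne (hw ▸ hxx'), mul_zero]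
  · rw [Pi.star_apply, eveKet_apply_of_ne hw, star_zero, zero_mul]

theorem margP_mul_star_eveKet_dotProduct_eveKet (hP0 : ∀ w, 0 ≤ P w) (y y' x : Fin l → ZMod 2) :
    (margP l P x : ℂ) * (star (eveKet l P y x) ⬝ᵥ eveKet l P y' x) =
      ((∑ z, (-1 : ℝ) ^ ((z ⬝ᵥ y).val + (z ⬝ᵥ y').val) * P (x, z) : ℝ) : ℂ) := by
  rw [dotProduct, Fintype.sum_prod_type, Finset.sum_eq_single x, Finset.mul_sum]
  · push_cast
    refine Finset.sum_congr rfl fun z _ => ?_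
    have hq : (√(P (x, z) / margP l P x) : ℂ) * √(P (x, z) / margP l P x) =
        P (x, z) / margP l P x := by
      exact_mod_cast Real.mul_self_sqrt (div_nonneg (hP0 _) (Finset.sum_nonneg fun z _ => hP0 _))
    have hmq : (margP l P x : ℂ) * (P (x, z) / margP l P x) = P (x, z) := by
      exact_mod_cast margP_mul_div_margP hP0 x z
    simp only [Pi.star_apply, eveKet, if_pos, star_mul', star_pow, star_neg, star_one,
      Complex.star_def, Complex.conj_ofReal, pow_add]
    linear_combination ((-1 : ℂ) ^ (z ⬝ᵥ y).val * (-1) ^ (z ⬝ᵥ y').val) * (margP l P x * hq + hmq)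
  · exact fun x' _ hx' => Finset.sum_eq_zero fun z _ => by
      rw [Pi.star_apply, eveKet_apply_of_ne hx', star_zero, zero_mul]
  · simp

theorem star_eveKet_dotProduct_eveKet_self (hP0 : ∀ w, 0 ≤ P w) {x : Fin l → ZMod 2}
    (hx : margP l P x ≠ 0) (y : Fin l → ZMod 2) : star (eveKet l P y x) ⬝ᵥ eveKet l P y x = 1 := by
  have h := margP_mul_star_eveKet_dotProduct_eveKet hP0 y y x
  simp only [Even.neg_one_pow (Even.add_self _), one_mul] at h
  exact mul_left_cancel₀ (Complex.ofReal_ne_zero.mpr hx) (h.trans (mul_one _).symm)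

end Eve

/-- For any `y, y'`, the fidelity between the corresponding Eve states is at least
`1 - 2 P_ph`, where `P_ph = 1 - ∑ x P(x, 0)` is the phase error probability. -/
theorem fidelity_eveState_ge (l : ℕ)
    (P : (Fin l → ZMod 2) × (Fin l → ZMod 2) → ℝ)
    (hP0 : ∀ w, 0 ≤ P w) (hP1 : ∑ w, P w = 1)
    (y y' : Fin l → ZMod 2) :
    fidelity (eveState l P y) (eveState l P y') ≥
      1 - 2 * (1 - ∑ x, P (x, 0)) := by
  have hm : ∀ x, 0 ≤ margP l P x := fun x => Finset.sum_nonneg fun z _ => hP0 (x, z)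
  have hm1 : ∑ x, margP l P x = 1 := by rw [← hP1, Fintype.sum_prod_type]; rfl
  rw [ge_iff_le, eveState, eveState, fidelity_sum_smul_vecMulVec_star hm
    (pairwise_star_eveKet_dotProduct_eveKet y' y') (pairwise_star_eveKet_dotProduct_eveKet y' y)
    fun x hx => star_eveKet_dotProduct_eveKet_self hP0 hx y']
  calc 1 - 2 * (1 - ∑ x, P (x, 0)) = ∑ x, (2 * P (x, 0) - margP l P x) := by
        rw [Finset.sum_sub_distrib, ← Finset.mul_sum, hm1]; ring
    _ ≤ ∑ x, ∑ z, (-1 : ℝ) ^ ((z ⬝ᵥ y').val + (z ⬝ᵥ y).val) * P (x, z) :=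
        Finset.sum_le_sum fun x _ => two_mul_sub_sum_le_sum_mul (fun z => hP0 (x, z))
          (fun z => (abs_le.mp (abs_neg_one_pow _).le).1) (by simp)
    _ ≤ ∑ x, margP l P x * ‖star (eveKet l P y' x) ⬝ᵥ eveKet l P y x‖ := by
        refine Finset.sum_le_sum fun x _ => ?_
        rw [← Complex.ofReal_re (∑ z, _), ← margP_mul_star_eveKet_dotProduct_eveKet hP0]
        refine (Complex.re_le_norm _).trans_eq ?_
        rw [norm_mul, Complex.norm_real, Real.norm_of_nonneg (hm x)]
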